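/- Let A be an m×n real matrix with singular value decomposition A = U Σ_A Vᵀ, where Σ_A = diag(ρ₁,…,ρₙ) with ρ₁ ≥ … ≥ ρₙ ≥ 0, and let Σ = diag(σ₁,…,σₙ) with prescribed σ₁ ≥ … ≥ σₙ ≥ 0. Then for every m×n matrix X of the form X = P Σ Qᵀ with P, Q orthogonal, ‖U Σ Vᵀ - A‖_F ≤ ‖X - A‖_F. That is, U Σ Vᵀ is a best approximation to A in Frobenius norm from the set of matrices with singular values σ₁,…,σₙ. -/

import Mathlib

/-!
Expanding the squares, `‖PΣQᵀ - A‖² = ‖Σ‖² + ‖Σ_A‖² - 2⟪PΣQᵀ, A⟫` for all orthogonal `P`, `Q`,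
so the claim is von Neumann's trace inequality `⟪PΣQᵀ, UΣ_AVᵀ⟫ ≤ ∑ σᵢρᵢ`, with equality at
`P = U`, `Q = V`. With `C = PᵀU` and `B = VᵀQ` the left side is `∑ σᵢ ρₖ Cᵢₖ Bₖᵢ` over
`i, k < min m n`, and `(|Cᵢₖ Bₖᵢ|)` is doubly substochastic since rows and columns of orthogonal
matrices are unit vectors. For such a matrix `W` and nonnegative nonincreasing `σ`, `ρ`, Abel
summation in `σ` reduces `∑ σᵢ ρₖ Wᵢₖ ≤ ∑ σᵢ ρᵢ` to the partial sums over `i ≤ s`, where the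
weights `∑_{i ≤ s} Wᵢₖ` lie in `[0, 1]` and add up to at most `s + 1`.
-/

open Matrix

/-- The m×n rectangular diagonal matrix with diagonal entries `σ`. -/
def diagRect {m n : ℕ} (σ : Fin n → ℝ) : Matrix (Fin m) (Fin n) ℝ :=
  Matrix.of fun i j => if (i : ℕ) = (j : ℕ) then σ j else 0

/-- The Frobenius norm of a matrix. -/
noncomputable def frob {m n : ℕ} (A : Matrix (Fin m) (Fin n) ℝ) : ℝ :=
  Real.sqrt (∑ i, ∑ j, (A i j) ^ 2)

open Finset

theorem Fin.sum_mul_le_sum_mul_of_sum_Iic_le {n : ℕ} {w c d : Fin n → ℝ} (hw : Antitone w)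
    (hw0 : ∀ i, 0 ≤ w i) (h : ∀ s, ∑ i ∈ Iic s, c i ≤ ∑ i ∈ Iic s, d i) :
    ∑ i, w i * c i ≤ ∑ i, w i * d i := by
  induction n with
  | zero => simp
  | succ n ih =>
    have hpeel : ∀ x : Fin (n + 1) → ℝ, ∑ i, w i * x i =
        ∑ i : Fin n, (w i.castSucc - w (last n)) * x i.castSucc + w (last n) * ∑ i, x i := by
      intro x
      simp only [Fin.sum_univ_castSucc, sub_mul, sum_sub_distrib, mul_add, mul_sum]
      ring
    rw [hpeel c, hpeel d]
    gcongr ?_ + w (last n) * ?_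
    · refine ih (fun i j hij => sub_le_sub_right (hw (castSucc_le_castSucc_iff.2 hij)) _)
        (fun i => sub_nonneg.2 (hw (le_last _))) (fun s => ?_)
      simpa only [← map_castSuccEmb_Iic, sum_map, castSuccEmb_apply] using h s.castSucc
    · exact hw0 _
    · have hlast : Iic (last n) = univ := by ext i; simp [le_last]
      simpa [hlast] using h (last n)

theorem sum_mul_le_sum_Iic_of_le_one {ι : Type*} [Fintype ι] [LinearOrder ι]
    [LocallyFiniteOrderBot ι] {ρ x : ι → ℝ} (hρ : Antitone ρ) (hρ0 : ∀ i, 0 ≤ ρ i)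
    (hx0 : ∀ i, 0 ≤ x i) (hx1 : ∀ i, x i ≤ 1) (s : ι) (hx : ∑ i, x i ≤ #(Iic s)) :
    ∑ i, ρ i * x i ≤ ∑ i ∈ Iic s, ρ i := by
  set e : ι → ℝ := fun i => x i - if i ≤ s then 1 else 0
  -- `e i ≤ 0` where `ρ i ≥ ρ s`, and `e i ≥ 0` where `ρ i ≤ ρ s`
  have hterm : ∀ i, ρ i * e i ≤ ρ s * e i := by
    intro i
    by_cases his : i ≤ s
    · exact mul_le_mul_of_nonpos_right (hρ his) (by simp [e, his, hx1 i])
    · exact mul_le_mul_of_nonneg_right (hρ (le_of_not_ge his)) (by simp [e, his, hx0 i])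
  have hsum_e : ∑ i, e i = ∑ i, x i - #(Iic s) := by
    simp [e, sum_sub_distrib, sum_boole, filter_ge_eq_Iic]
  have hIic : ∑ i ∈ Iic s, ρ i = ∑ i, ρ i * if i ≤ s then 1 else 0 := by
    simp [← sum_filter, filter_ge_eq_Iic]
  calc ∑ i, ρ i * x i = ∑ i, ρ i * e i + ∑ i ∈ Iic s, ρ i := by
        simp only [hIic, e, mul_sub, sum_sub_distrib]; ring
    _ ≤ ∑ i, ρ s * e i + ∑ i ∈ Iic s, ρ i := by
        gcongr ?_ + _
        exact sum_le_sum fun i _ => hterm i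
    _ ≤ ∑ i ∈ Iic s, ρ i := by
        rw [← mul_sum, hsum_e]
        nlinarith [hρ0 s]

theorem sum_mul_mul_le_of_sum_abs_le_one {n : ℕ} {σ ρ : Fin n → ℝ} (hσ : Antitone σ)
    (hρ : Antitone ρ) (hσ0 : ∀ i, 0 ≤ σ i) (hρ0 : ∀ i, 0 ≤ ρ i) (W : Matrix (Fin n) (Fin n) ℝ)
    (hrow : ∀ i, ∑ k, |W i k| ≤ 1) (hcol : ∀ k, ∑ i, |W i k| ≤ 1) :
    ∑ i, ∑ k, σ i * ρ k * W i k ≤ ∑ i, σ i * ρ i := by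
  calc ∑ i, ∑ k, σ i * ρ k * W i k ≤ ∑ i, σ i * ∑ k, ρ k * |W i k| := by
        simp only [mul_sum, ← mul_assoc]
        gcongr with i _ k _
        · exact mul_nonneg (hσ0 i) (hρ0 k)
        · exact le_abs_self _
    _ ≤ ∑ i, σ i * ρ i := by
        refine Fin.sum_mul_le_sum_mul_of_sum_Iic_le hσ hσ0 fun s => ?_
        rw [sum_comm]
        simp only [← mul_sum]
        refine sum_mul_le_sum_Iic_of_le_one hρ hρ0 (fun k => sum_nonneg fun i _ => abs_nonneg _)
          (fun k => (sum_le_univ_sum_of_nonneg fun i => abs_nonneg _).trans (hcol k)) s ?_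
        rw [sum_comm]
        simpa using sum_le_sum fun i (_ : i ∈ Iic s) => hrow i

theorem sum_abs_mul_le_one {γ : Type*} [Fintype γ] {f g : γ → ℝ} (hf : ∑ k, f k ^ 2 ≤ 1)
    (hg : ∑ k, g k ^ 2 ≤ 1) : ∑ k, |f k * g k| ≤ 1 := by
  have hamgm : ∀ k, 2 * |f k * g k| ≤ f k ^ 2 + g k ^ 2 := fun k => by
    simpa [abs_mul, sq_abs, mul_assoc] using two_mul_le_add_sq |f k| |g k|
  have := sum_le_sum fun k (_ : k ∈ univ) => hamgm k
  rw [← mul_sum, sum_add_distrib] at this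
  linarith

namespace Matrix

theorem sum_sq_apply_comp_le_one {α β γ : Type*} [Fintype β] [Fintype γ] [DecidableEq α]
    {C : Matrix α β ℝ} (hC : C * Cᵀ = 1) {e : γ → β} (he : Function.Injective e) (a : α) :
    ∑ k, C a (e k) ^ 2 ≤ 1 :=
  calc ∑ k, C a (e k) ^ 2 = ∑ b ∈ univ.map ⟨e, he⟩, C a b ^ 2 := by simp
    _ ≤ ∑ b, C a b ^ 2 := sum_le_univ_sum_of_nonneg fun b => sq_nonneg _
    _ = 1 := by simpa [mul_apply, sq] using congr_fun (congr_fun hC a) a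

theorem sum_mul_mul_apply_orthogonal_le {α β : Type*} [Fintype α] [DecidableEq α] [Fintype β]
    [DecidableEq β] {r : ℕ} {σ ρ : Fin r → ℝ} (hσ : Antitone σ) (hρ : Antitone ρ)
    (hσ0 : ∀ i, 0 ≤ σ i) (hρ0 : ∀ i, 0 ≤ ρ i) {C : Matrix α α ℝ} {B : Matrix β β ℝ}
    (hC : Cᵀ * C = 1) (hB : Bᵀ * B = 1) {e : Fin r → α} {f : Fin r → β}
    (he : Function.Injective e) (hf : Function.Injective f) :
    ∑ i, ∑ k, σ i * ρ k * (C (e i) (e k) * B (f k) (f i)) ≤ ∑ i, σ i * ρ i := by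
  have hCT : Cᵀ * Cᵀᵀ = 1 := by rwa [transpose_transpose]
  have hBT : Bᵀ * Bᵀᵀ = 1 := by rwa [transpose_transpose]
  refine sum_mul_mul_le_of_sum_abs_le_one hσ hρ hσ0 hρ0
    (fun i k => C (e i) (e k) * B (f k) (f i)) (fun i => ?_) (fun k => ?_)
  · exact sum_abs_mul_le_one (sum_sq_apply_comp_le_one (mul_eq_one_comm.mp hC) he _)
      (sum_sq_apply_comp_le_one hBT hf (f i))
  · exact sum_abs_mul_le_one (sum_sq_apply_comp_le_one hCT he (e k))
      (sum_sq_apply_comp_le_one (mul_eq_one_comm.mp hB) hf _)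

theorem transpose_mul_self_transpose_mul_eq_one {κ : Type*} [Fintype κ] [DecidableEq κ]
    {P U : Matrix κ κ ℝ} (hP : Pᵀ * P = 1) (hU : Uᵀ * U = 1) : (Pᵀ * U)ᵀ * (Pᵀ * U) = 1 := by
  rw [transpose_mul, transpose_transpose, Matrix.mul_assoc, ← Matrix.mul_assoc P,
    mul_eq_one_comm.mp hP, Matrix.one_mul, hU]

section Trace

variable {α β R : Type*} [Fintype α] [Fintype β] [CommRing R]

theorem trace_transpose_mul_self_sub (M N : Matrix α β R) :
    trace ((M - N)ᵀ * (M - N)) = trace (Mᵀ * M) - 2 * trace (Mᵀ * N) + trace (Nᵀ * N) := by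
  have hswap : trace (Nᵀ * M) = trace (Mᵀ * N) := by
    rw [← trace_transpose, transpose_mul, transpose_transpose]
  simp only [transpose_sub, Matrix.sub_mul, Matrix.mul_sub, trace_sub, hswap]
  ring

theorem trace_conj_transpose_mul_conj (M N : Matrix α β R) (P U : Matrix α α R)
    (Q V : Matrix β β R) :
    trace ((P * M * Qᵀ)ᵀ * (U * N * Vᵀ)) = trace (Mᵀ * (Pᵀ * U) * N * (Vᵀ * Q)) := by
  simp only [transpose_mul, transpose_transpose, Matrix.mul_assoc]
  rw [trace_mul_comm Q]
  simp only [Matrix.mul_assoc]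

theorem trace_conj_transpose_mul_self [DecidableEq α] [DecidableEq β] {M : Matrix α β R}
    {P : Matrix α α R} {Q : Matrix β β R} (hP : Pᵀ * P = 1) (hQ : Qᵀ * Q = 1) :
    trace ((P * M * Qᵀ)ᵀ * (P * M * Qᵀ)) = trace (Mᵀ * M) := by
  rw [trace_conj_transpose_mul_conj, hP, hQ, Matrix.mul_one, Matrix.mul_one]

theorem trace_diagonal_mul_diagonal_mul [DecidableEq α] (s t : α → R) (M N : Matrix α α R) :
    trace (diagonal s * M * diagonal t * N) = ∑ i, ∑ k, s i * t k * (M i k * N k i) := by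
  simp only [trace, diag_apply, mul_apply, diagonal_apply, ite_mul, zero_mul, sum_ite_eq,
    mem_univ, if_true, mul_ite, mul_zero, sum_ite_eq']
  exact sum_congr rfl fun i _ => sum_congr rfl fun k _ => by ring

end Trace

theorem transpose_one_submatrix_mul_mul {α γ : Type*} [Fintype α] [DecidableEq α]
    (C : Matrix α α ℝ) (e : γ → α) :
    ((1 : Matrix α α ℝ).submatrix id e)ᵀ * C * (1 : Matrix α α ℝ).submatrix id e =
      C.submatrix e e := by
  ext i k
  simp [mul_apply, one_apply]

end Matrix

theorem diagRect_eq_submatrix_one_mul_diagonal_mul {m n : ℕ} (σ : Fin n → ℝ) :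
    (diagRect σ : Matrix (Fin m) (Fin n) ℝ) =
      (1 : Matrix (Fin m) (Fin m) ℝ).submatrix id (Fin.castLE (min_le_left m n)) *
        diagonal (σ ∘ Fin.castLE (min_le_right m n)) *
        ((1 : Matrix (Fin n) (Fin n) ℝ).submatrix id (Fin.castLE (min_le_right m n)))ᵀ := by
  ext a b
  simp only [diagRect, of_apply, diagonal, Function.comp_apply, transpose_submatrix,
    transpose_one, mul_apply, submatrix_apply, one_apply, id_eq, mul_ite, ite_mul, one_mul,
    zero_mul, mul_zero, sum_ite_eq', mem_univ, if_true, mul_one]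
  by_cases hb : (b : ℕ) < min m n
  · obtain ⟨b, rfl⟩ : ∃ b', Fin.castLE (min_le_right m n) b' = b := ⟨⟨b, hb⟩, rfl⟩
    simp only [Fin.castLE_inj, sum_ite_eq', mem_univ, if_true]
    simp [Fin.ext_iff]
  · have hab : ¬ (a : ℕ) = b := fun h => hb (lt_min (h ▸ a.2) b.2)
    have hx : ∀ x, Fin.castLE (min_le_right m n) x ≠ b := fun x h => hb (h ▸ x.2)
    simp [hab, hx]

theorem trace_diagRect_transpose_mul {m n : ℕ} (σ ρ : Fin n → ℝ) (C : Matrix (Fin m) (Fin m) ℝ)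
    (B : Matrix (Fin n) (Fin n) ℝ) :
    trace ((diagRect σ : Matrix (Fin m) (Fin n) ℝ)ᵀ * C *
        (diagRect ρ : Matrix (Fin m) (Fin n) ℝ) * B) =
      ∑ i, ∑ k, σ (Fin.castLE (min_le_right m n) i) * ρ (Fin.castLE (min_le_right m n) k) *
        (C (Fin.castLE (min_le_left m n) i) (Fin.castLE (min_le_left m n) k) *
          B (Fin.castLE (min_le_right m n) k) (Fin.castLE (min_le_right m n) i)) := by
  set E := (1 : Matrix (Fin m) (Fin m) ℝ).submatrix id (Fin.castLE (min_le_left m n))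
  set F := (1 : Matrix (Fin n) (Fin n) ℝ).submatrix id (Fin.castLE (min_le_right m n))
  have hcyc : ∀ D₁ D₂ : Matrix (Fin (min m n)) (Fin (min m n)) ℝ,
      trace ((E * D₁ * Fᵀ)ᵀ * C * (E * D₂ * Fᵀ) * B) =
        trace (D₁ᵀ * (Eᵀ * C * E) * D₂ * (Fᵀ * B * F)) := by
    intro D₁ D₂
    simp only [transpose_mul, transpose_transpose, Matrix.mul_assoc]
    rw [trace_mul_comm F]
    simp only [Matrix.mul_assoc]
  rw [diagRect_eq_submatrix_one_mul_diagonal_mul, diagRect_eq_submatrix_one_mul_diagonal_mul,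
    hcyc, diagonal_transpose, transpose_one_submatrix_mul_mul, transpose_one_submatrix_mul_mul,
    trace_diagonal_mul_diagonal_mul]
  rfl

theorem frob_eq_sqrt_trace {m n : ℕ} (A : Matrix (Fin m) (Fin n) ℝ) :
    frob A = √(trace (Aᵀ * A)) := by
  simp only [frob, trace, Matrix.diag, mul_apply, transpose_apply, sq]
  rw [sum_comm]

theorem stmt_8 (m n : ℕ) (A : Matrix (Fin m) (Fin n) ℝ)
    (ρ σ : Fin n → ℝ) (hρ : Antitone ρ) (hσ : Antitone σ)
    (hρ0 : ∀ i, 0 ≤ ρ i) (hσ0 : ∀ i, 0 ≤ σ i)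
    (U : Matrix (Fin m) (Fin m) ℝ) (V : Matrix (Fin n) (Fin n) ℝ)
    (hU : Uᵀ * U = 1) (hV : Vᵀ * V = 1)
    (hA : A = U * (diagRect ρ : Matrix (Fin m) (Fin n) ℝ) * Vᵀ) :
    ∀ (X : Matrix (Fin m) (Fin n) ℝ)
      (P : Matrix (Fin m) (Fin m) ℝ) (Q : Matrix (Fin n) (Fin n) ℝ),
      Pᵀ * P = 1 → Qᵀ * Q = 1 → X = P * (diagRect σ : Matrix (Fin m) (Fin n) ℝ) * Qᵀ →
      frob (U * (diagRect σ : Matrix (Fin m) (Fin n) ℝ) * Vᵀ - A) ≤ frob (X - A) := by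
  intro X P Q hP hQ hX
  have hmono := (Fin.strictMono_castLE (min_le_right m n)).monotone
  rw [frob_eq_sqrt_trace, frob_eq_sqrt_trace, trace_transpose_mul_self_sub,
    trace_transpose_mul_self_sub, hX, trace_conj_transpose_mul_self hU hV,
    trace_conj_transpose_mul_self hP hQ]
  gcongr √(_ - 2 * ?_ + _)
  rw [hA, trace_conj_transpose_mul_conj, trace_conj_transpose_mul_conj, hU, hV,
    trace_diagRect_transpose_mul, trace_diagRect_transpose_mul]
  simpa [one_apply] using sum_mul_mul_apply_orthogonal_le (hσ.comp_monotone hmono)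
    (hρ.comp_monotone hmono) (fun _ => hσ0 _) (fun _ => hρ0 _)
    (transpose_mul_self_transpose_mul_eq_one hP hU) (transpose_mul_self_transpose_mul_eq_one hV hQ)
    (Fin.castLE_injective (min_le_left m n)) (Fin.castLE_injective (min_le_right m n))
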